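/- (New Bernstein inequality) Let a = (a₁,…,a_m) be a fixed nonzero real vector and Y₁,…,Y_m independent mean-zero random variables with E|Y_i| ≤ 2 and ‖Y_i‖_{ψ₁} ≤ K_i² where K_i ≥ 6/5. Let K = max_i K_i. Then there is an absolute constant c > 0 such that for every t ≥ 0, P(|Σ_i a_i Y_i| ≥ t) ≤ 2 exp(-c · min( t² / (Σ_i a_i² K_i² log K_i), t / (‖a‖_∞ K² log K) )). -/

import Mathlib

/-!
Chernoff's method. For one variable, `e^x ≤ 1 + x + x² e^{|x|}` and `E Y = 0` reduce the bound on
`E e^{λY}` to a bound on `E[Y² e^{|λ||Y|}]`. Truncate at `M = 8K²(1 + 2 log K)`: below `M` the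
integrand is at most `2M|Y|`, controlled by `E|Y| ≤ 2`; above `M`, `Y² ≤ M² e^{(|Y|-M)/(4K²)}`
and `e^{|λ||Y|} ≤ e^{|Y|/(4K²)}`, so it is at most `M² e^{-M/(4K²)} e^{|Y|/(2K²)}`, which is
`≤ M² K⁻⁴ e^{|Y|/(2K²)}` and controlled by the ψ₁ bound `E e^{|Y|/(2K²)} ≤ 2`. Hence
`E e^{λY} ≤ exp(C λ² K² log K)` for `|λ| ≤ c / (K² log K)`. Independence multiplies these bounds
for the `a_i Y_i`, optimizing `λ ∈ [0, c / (‖a‖_∞ K² log K)]` produces the two regimes of the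
minimum, and the lower tail is the upper tail for `-a`.
-/

open MeasureTheory ProbabilityTheory

/-- The ψ_α (Orlicz) norm of a real random variable, with the convention `sInf ∅ = ∞`. -/
noncomputable def psiNorm {Ω : Type*} [MeasurableSpace Ω] (μ : Measure Ω) (α : ℝ)
    (X : Ω → ℝ) : ENNReal :=
  sInf {t : ENNReal | ∃ s : ℝ, 0 < s ∧ t = ENNReal.ofReal s ∧
    (∫⁻ ω, ENNReal.ofReal (Real.exp (|X ω| ^ α / s ^ α)) ∂μ) ≤ 2}

open Real

lemma one_sixth_le_log {K : ℝ} (hK : 6 / 5 ≤ K) : 1 / 6 ≤ log K := by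
  have := one_sub_inv_le_log_of_pos (show 0 < K by linarith)
  have : K⁻¹ ≤ 5 / 6 := by
    rw [inv_le_comm₀ (by linarith) (by norm_num)]; linarith
  linarith

lemma exp_le_one_add_add_sq_mul_exp_abs (x : ℝ) : exp x ≤ 1 + x + x ^ 2 * exp |x| := by
  have h1 : 1 ≤ exp |x| := one_le_exp (abs_nonneg x)
  rcases le_or_gt 1 |x| with hx | hx
  · have hx2 : 1 ≤ x ^ 2 := by nlinarith [sq_abs x]
    have : exp x ≤ exp |x| := exp_le_exp.mpr (le_abs_self x)
    have : 0 ≤ x + x ^ 2 := by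
      rcases abs_cases x with ⟨h, -⟩ | ⟨h, -⟩ <;> nlinarith
    nlinarith [mul_nonneg (sub_nonneg.mpr hx2) (sub_nonneg.mpr h1)]
  · have := (abs_le.mp (abs_exp_sub_one_sub_id_le hx.le)).2
    nlinarith [sq_nonneg x]

/-- `log (v / u) ≤ (v - u) / u ≤ (v - u) / (4 L)`, squared. -/
lemma sq_le_sq_mul_exp_of_le {L u v : ℝ} (hL : 0 < L) (hu : 4 * L ≤ u) (huv : u ≤ v) :
    v ^ 2 ≤ u ^ 2 * exp ((v - u) / (2 * L)) := by
  set s := (v - u) / (4 * L)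
  have hs : 0 ≤ s := by positivity
  have hv : v ≤ u * exp s := by
    have : (v - u) * 1 ≤ (v - u) * (u / (4 * L)) :=
      mul_le_mul_of_nonneg_left ((one_le_div (by positivity)).mpr hu) (by linarith)
    have : u * s = (v - u) * (u / (4 * L)) := by ring
    nlinarith [add_one_le_exp s]
  calc v ^ 2 ≤ (u * exp s) ^ 2 := pow_le_pow_left₀ (by linarith) hv 2
    _ = u ^ 2 * exp ((v - u) / (2 * L)) := by
      rw [mul_pow, ← exp_nat_mul]; congr 2; simp only [s]; field_simp; ring

lemma sq_mul_exp_le {L M r y : ℝ} (hL : 0 < L) (hM : 4 * L ≤ M) (hr : 0 ≤ r)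
    (hrL : r ≤ 1 / (2 * L)) (hrM : r * M ≤ 1 / 2) (hy : 0 ≤ y) :
    y ^ 2 * exp (r * y) ≤ 2 * M * y + M ^ 2 * exp (-(M / (2 * L))) * exp (y / L) := by
  have hMpos : 0 < M := by linarith
  rcases le_total y M with hyM | hMy
  · have hexp : exp (r * y) ≤ 2 := calc
      exp (r * y) ≤ exp (1 / 2) := exp_le_exp.mpr (by nlinarith)
      _ ≤ 2 := by
        rw [← le_log_iff_exp_le (by norm_num)]; linarith [log_two_gt_d9]
    have : y ^ 2 * exp (r * y) ≤ M * y * 2 :=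
      mul_le_mul (by nlinarith) hexp (exp_pos _).le (by positivity)
    have : 0 ≤ M ^ 2 * exp (-(M / (2 * L))) * exp (y / L) := by positivity
    linarith
  · have hexp : exp (r * y) ≤ exp (y / (2 * L)) := by
      apply exp_le_exp.mpr
      calc r * y ≤ 1 / (2 * L) * y := mul_le_mul_of_nonneg_right hrL hy
        _ = y / (2 * L) := by ring
    calc y ^ 2 * exp (r * y)
        ≤ M ^ 2 * exp ((y - M) / (2 * L)) * exp (y / (2 * L)) :=
          mul_le_mul (sq_le_sq_mul_exp_of_le hL hM hMy) hexp (exp_pos _).le (by positivity)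
      _ = M ^ 2 * exp (-(M / (2 * L))) * exp (y / L) := by
          rw [mul_assoc, mul_assoc, ← exp_add, ← exp_add]; congr 2; field_simp; ring
      _ ≤ _ := le_add_of_nonneg_left (by positivity)

section

variable {Ω : Type*} [MeasurableSpace Ω] {μ : Measure Ω} {Y : Ω → ℝ}

lemma lintegral_exp_abs_div_le_two_of_psiNorm_lt {u : ℝ} (h : psiNorm μ 1 Y < ENNReal.ofReal u) :
    ∫⁻ ω, ENNReal.ofReal (exp (|Y ω| / u)) ∂μ ≤ 2 := by
  obtain ⟨_, ⟨s, hs, rfl, hint⟩, hsu⟩ := sInf_lt_iff.mp h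
  obtain ⟨hsu, -⟩ := (ENNReal.ofReal_lt_ofReal_iff').mp hsu
  simp only [rpow_one] at hint
  refine le_trans (lintegral_mono fun ω => ENNReal.ofReal_le_ofReal ?_) hint
  exact exp_le_exp.mpr (div_le_div_of_nonneg_left (abs_nonneg _) hs hsu.le)

lemma integrable_and_integral_le_of_lintegral_le {f : Ω → ℝ} {C : ℝ}
    (hf : AEStronglyMeasurable f μ) (h0 : ∀ ω, 0 ≤ f ω)
    (hC : 0 ≤ C) (h : ∫⁻ ω, ENNReal.ofReal (f ω) ∂μ ≤ ENNReal.ofReal C) :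
    Integrable f μ ∧ ∫ ω, f ω ∂μ ≤ C := by
  refine ⟨⟨hf, ?_⟩, ?_⟩
  · rw [hasFiniteIntegral_iff_ofReal (ae_of_all _ h0)]
    exact h.trans_lt ENNReal.ofReal_lt_top
  · rw [integral_eq_lintegral_of_nonneg_ae (ae_of_all _ h0) hf]
    exact ENNReal.toReal_le_of_le_ofReal hC h

lemma integrable_exp_mul_of_abs_le {L l : ℝ} (hY : AEMeasurable Y μ)
    (hexp : Integrable (fun ω => exp (|Y ω| / L)) μ) (hl : |l| ≤ 1 / L) :
    Integrable (fun ω => exp (l * Y ω)) μ := by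
  refine hexp.mono' (hY.const_mul l).exp.aestronglyMeasurable (ae_of_all _ fun ω => ?_)
  rw [norm_eq_abs, abs_exp, exp_le_exp]
  calc l * Y ω ≤ |l| * |Y ω| := (le_abs_self _).trans (abs_mul _ _).le
    _ ≤ 1 / L * |Y ω| := mul_le_mul_of_nonneg_right hl (abs_nonneg _)
    _ = |Y ω| / L := by ring

lemma mgf_le_exp_of_integral_exp_abs_le [IsProbabilityMeasure μ] {L M l : ℝ} (hL : 0 < L)
    (hM : 4 * L ≤ M) (hlL : |l| ≤ 1 / (2 * L)) (hlM : |l| * M ≤ 1 / 2)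
    (hY : Integrable Y μ) (hmean : ∫ ω, Y ω ∂μ = 0) (habs : ∫ ω, |Y ω| ∂μ ≤ 2)
    (hexpI : Integrable (fun ω => exp (|Y ω| / L)) μ)
    (hexp : ∫ ω, exp (|Y ω| / L) ∂μ ≤ 2) :
    mgf Y μ l ≤ exp (l ^ 2 * (4 * M + 2 * (M ^ 2 * exp (-(M / (2 * L)))))) := by
  set c := M ^ 2 * exp (-(M / (2 * L)))
  have hl : |l| ≤ 1 / L := hlL.trans (by gcongr; linarith)
  have hdom : ∀ ω,
      exp (l * Y ω) ≤ 1 + l * Y ω + l ^ 2 * (2 * M * |Y ω| + c * exp (|Y ω| / L)) := by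
    intro ω
    have hsq := sq_mul_exp_le hL hM (abs_nonneg l) hlL hlM (abs_nonneg (Y ω))
    calc exp (l * Y ω) ≤ 1 + l * Y ω + (l * Y ω) ^ 2 * exp |l * Y ω| :=
          exp_le_one_add_add_sq_mul_exp_abs _
      _ = 1 + l * Y ω + l ^ 2 * (|Y ω| ^ 2 * exp (|l| * |Y ω|)) := by
          rw [abs_mul, sq_abs]; ring
      _ ≤ _ := by gcongr
  have hIdom : Integrable (fun ω => 2 * M * |Y ω| + c * exp (|Y ω| / L)) μ :=
    (hY.abs.const_mul _).add (hexpI.const_mul _)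
  have hIlin : Integrable (fun ω => 1 + l * Y ω) μ := (integrable_const 1).add (hY.const_mul l)
  calc mgf Y μ l
      ≤ ∫ ω, (1 + l * Y ω) + l ^ 2 * (2 * M * |Y ω| + c * exp (|Y ω| / L)) ∂μ :=
        integral_mono (integrable_exp_mul_of_abs_le hY.aemeasurable hexpI hl)
          (hIlin.add (hIdom.const_mul _)) hdom
    _ = 1 + l ^ 2 * (2 * M * ∫ ω, |Y ω| ∂μ + c * ∫ ω, exp (|Y ω| / L) ∂μ) := by
        rw [integral_add hIlin (hIdom.const_mul _), integral_add (integrable_const 1)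
          (hY.const_mul l), integral_const_mul, integral_const_mul, integral_add
          (hY.abs.const_mul _) (hexpI.const_mul _), integral_const_mul, integral_const_mul,
          hmean]
        simp
    _ ≤ 1 + l ^ 2 * (4 * M + 2 * c) := by
        have hc : 0 ≤ c := by positivity
        have := mul_le_mul_of_nonneg_left habs (by linarith : 0 ≤ 2 * M)
        have := mul_le_mul_of_nonneg_left hexp hc
        gcongr 1 + l ^ 2 * ?_
        linarith
    _ ≤ _ := by linarith [add_one_le_exp (l ^ 2 * (4 * M + 2 * c))]

lemma integrable_exp_mul_and_mgf_le [IsProbabilityMeasure μ] {K l : ℝ} (hK : 6 / 5 ≤ K)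
    (hY : Integrable Y μ) (hmean : ∫ ω, Y ω ∂μ = 0) (habs : ∫ ω, |Y ω| ∂μ ≤ 2)
    (hexpI : Integrable (fun ω => exp (|Y ω| / (2 * K ^ 2))) μ)
    (hexp : ∫ ω, exp (|Y ω| / (2 * K ^ 2)) ∂μ ≤ 2) (hl : |l| ≤ 1 / (128 * K ^ 2 * log K)) :
    Integrable (fun ω => exp (l * Y ω)) μ ∧
      mgf Y μ l ≤ exp (8448 * l ^ 2 * (K ^ 2 * log K)) := by
  set g := log K
  have hg : 1 / 6 ≤ g := one_sixth_le_log hK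
  have hgK : g ≤ K ^ 2 := by nlinarith [log_le_sub_one_of_pos (show 0 < K by linarith)]
  have hl' : |l| * (128 * K ^ 2 * g) ≤ 1 := (le_div_iff₀ (by positivity)).mp hl
  set M := 4 * (2 * K ^ 2) * (1 + 2 * g)
  have hM : M ≤ 64 * K ^ 2 * g := by nlinarith
  have hdecay : exp (-(M / (2 * (2 * K ^ 2)))) * K ^ 4 ≤ 1 := by
    have : M / (2 * (2 * K ^ 2)) = 2 + 4 * g := by field_simp; ring
    rw [this, ← exp_log (show 0 < K by linarith), ← exp_nat_mul, ← exp_add]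
    exact exp_le_one_iff.mpr (by push_cast; linarith)
  have htail : M ^ 2 * exp (-(M / (2 * (2 * K ^ 2)))) ≤ 64 * (1 + 2 * g) ^ 2 := by
    have hK4 : 0 < K ^ 4 := by positivity
    rw [← mul_le_mul_iff_of_pos_right hK4, mul_assoc]
    calc M ^ 2 * (exp (-(M / (2 * (2 * K ^ 2)))) * K ^ 4) ≤ M ^ 2 :=
          mul_le_of_le_one_right (sq_nonneg M) hdecay
      _ = 64 * (1 + 2 * g) ^ 2 * K ^ 4 := by ring
  refine ⟨integrable_exp_mul_of_abs_le hY.aemeasurable hexpI ?_,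
    (mgf_le_exp_of_integral_exp_abs_le (M := M) (by positivity) (by nlinarith) ?_ ?_ hY hmean
      habs hexpI hexp).trans (exp_le_exp.mpr ?_)⟩
  · rw [le_div_iff₀ (by positivity)]; nlinarith
  · rw [le_div_iff₀ (by positivity)]; nlinarith
  · nlinarith [abs_nonneg l]
  · have : 4 * M + 2 * (M ^ 2 * exp (-(M / (2 * (2 * K ^ 2))))) ≤ 8448 * (K ^ 2 * g) := by
      nlinarith
    nlinarith [mul_le_mul_of_nonneg_left this (sq_nonneg l)]

lemma integrable_exp_mul_and_mgf_le_of_psiNorm_le [IsProbabilityMeasure μ] {K l : ℝ}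
    (hK : 6 / 5 ≤ K) (hY : Integrable Y μ) (hmean : ∫ ω, Y ω ∂μ = 0)
    (habs : ∫⁻ ω, ENNReal.ofReal |Y ω| ∂μ ≤ 2)
    (hpsi : psiNorm μ 1 Y ≤ ENNReal.ofReal (K ^ 2)) (hl : |l| ≤ 1 / (128 * K ^ 2 * log K)) :
    Integrable (fun ω => exp (l * Y ω)) μ ∧
      mgf Y μ l ≤ exp (8448 * l ^ 2 * (K ^ 2 * log K)) := by
  have hexp : ∫⁻ ω, ENNReal.ofReal (exp (|Y ω| / (2 * K ^ 2))) ∂μ ≤ ENNReal.ofReal 2 := by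
    rw [ENNReal.ofReal_ofNat]
    -- the infimum defining `psiNorm` need not be attained: pass to the larger scale `2 K²`
    refine lintegral_exp_abs_div_le_two_of_psiNorm_lt (hpsi.trans_lt ?_)
    exact (ENNReal.ofReal_lt_ofReal_iff (by positivity)).mpr (by nlinarith)
  rw [← ENNReal.ofReal_ofNat] at habs
  obtain ⟨hexpI, hexp⟩ := integrable_and_integral_le_of_lintegral_le (by fun_prop)
    (fun ω => (exp_pos _).le) zero_le_two hexp
  obtain ⟨-, habs⟩ := integrable_and_integral_le_of_lintegral_le (by fun_prop)
    (fun ω => abs_nonneg _) zero_le_two habs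
  exact integrable_exp_mul_and_mgf_le hK hY hmean habs hexpI hexp hl

lemma measureReal_sum_ge_le_of_mgf_le [IsFiniteMeasure μ] {ι : Type*} [Fintype ι]
    {X : ι → Ω → ℝ} {v : ι → ℝ} {l : ℝ} (hind : iIndepFun X μ) (hX : ∀ i, Measurable (X i))
    (hl : 0 ≤ l) (hint : ∀ i, Integrable (fun ω => exp (l * X i ω)) μ)
    (hmgf : ∀ i, mgf (X i) μ l ≤ exp (l ^ 2 * v i)) (t : ℝ) :
    μ.real {ω | t ≤ ∑ i, X i ω} ≤ exp (-l * t + l ^ 2 * ∑ i, v i) := by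
  calc μ.real {ω | t ≤ ∑ i, X i ω} = μ.real {ω | t ≤ (∑ i, X i) ω} := by
        simp only [Finset.sum_apply]
    _ ≤ exp (-l * t) * mgf (∑ i, X i) μ l :=
        measure_ge_le_exp_mul_mgf t hl (hind.integrable_exp_mul_sum hX fun i _ => hint i)
    _ = exp (-l * t) * ∏ i, mgf (X i) μ l := by rw [hind.mgf_sum hX]
    _ ≤ exp (-l * t) * ∏ i, exp (l ^ 2 * v i) := by
        gcongr with i
        · exact fun _ _ => mgf_nonneg
        · exact hmgf i
    _ = exp (-l * t + l ^ 2 * ∑ i, v i) := by rw [← exp_sum, ← exp_add, Finset.mul_sum]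

lemma exists_neg_mul_add_sq_mul_le {V β t : ℝ} (hV : 0 < V) (hβ : 0 < β) (ht : 0 ≤ t) :
    ∃ l, 0 ≤ l ∧ l ≤ β ∧ -l * t + l ^ 2 * V ≤ -min (t ^ 2 / (4 * V)) (β * t / 2) := by
  rcases le_total (t / (2 * V)) β with h | h
  · refine ⟨t / (2 * V), by positivity, h, ?_⟩
    have : -(t / (2 * V)) * t + (t / (2 * V)) ^ 2 * V = -(t ^ 2 / (4 * V)) := by
      field_simp; ring
    linarith [min_le_left (t ^ 2 / (4 * V)) (β * t / 2)]
  · refine ⟨β, hβ.le, le_rfl, ?_⟩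
    have : 2 * V * β ≤ t := by rwa [le_div_iff₀ (by positivity), mul_comm] at h
    nlinarith [min_le_right (t ^ 2 / (4 * V)) (β * t / 2)]

lemma abs_mul_le_one_div_mul_log {l x xmax k K : ℝ} (hl : 0 ≤ l)
    (hlK : l ≤ 1 / (128 * (xmax * K ^ 2 * log K))) (hx : |x| ≤ xmax) (hk : 6 / 5 ≤ k)
    (hkK : k ≤ K) : |l * x| ≤ 1 / (128 * k ^ 2 * log k) := by
  have hlogk : 0 < log k := by linarith [one_sixth_le_log hk]
  have hxmax : 0 ≤ xmax := (abs_nonneg x).trans hx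
  rw [abs_mul, abs_of_nonneg hl]
  rcases hxmax.eq_or_lt with h0 | hpos
  · rw [← h0] at hx
    rw [abs_nonpos_iff.mp hx, abs_zero, mul_zero]
    positivity
  calc l * |x| ≤ 1 / (128 * (xmax * K ^ 2 * log K)) * xmax :=
        mul_le_mul hlK hx (abs_nonneg x) (hl.trans hlK)
    _ = 1 / (128 * K ^ 2 * log K) := by
        have := one_sixth_le_log (hk.trans hkK)
        field_simp
    _ ≤ 1 / (128 * k ^ 2 * log k) := by gcongr

lemma measure_sum_mul_ge_le [IsProbabilityMeasure μ] {ι : Type*} [Fintype ι] {a : ι → ℝ}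
    {Y : ι → Ω → ℝ} {Ks : ι → ℝ} {K amax t : ℝ} (ha : a ≠ 0) (hY : ∀ i, Measurable (Y i))
    (hind : iIndepFun Y μ) (hint : ∀ i, Integrable (Y i) μ) (hmean : ∀ i, ∫ ω, Y i ω ∂μ = 0)
    (habs : ∀ i, ∫⁻ ω, ENNReal.ofReal |Y i ω| ∂μ ≤ 2) (hKs : ∀ i, 6 / 5 ≤ Ks i)
    (hpsi : ∀ i, psiNorm μ 1 (Y i) ≤ ENNReal.ofReal (Ks i ^ 2)) (hKsK : ∀ i, Ks i ≤ K)
    (hamax : ∀ i, |a i| ≤ amax) (ht : 0 ≤ t) :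
    μ {ω | t ≤ ∑ i, a i * Y i ω} ≤ ENNReal.ofReal (exp (-(1 / 33792) *
      min (t ^ 2 / ∑ i, a i ^ 2 * Ks i ^ 2 * log (Ks i)) (t / (amax * K ^ 2 * log K)))) := by
  obtain ⟨j, hj⟩ : ∃ j, a j ≠ 0 := Function.ne_iff.mp ha
  have hlog : ∀ i, 1 / 6 ≤ log (Ks i) := fun i => one_sixth_le_log (hKs i)
  set V := ∑ i, a i ^ 2 * Ks i ^ 2 * log (Ks i)
  have hV : 0 < V := Finset.sum_pos' (fun i _ => by have := hlog i; positivity)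
    ⟨j, Finset.mem_univ j, by have := hlog j; have := hKs j; positivity⟩
  set b := amax * K ^ 2 * log K
  have hb : 0 < b := by
    have := (abs_pos.mpr hj).trans_le (hamax j)
    have := hKs j |>.trans (hKsK j)
    have := one_sixth_le_log this
    positivity
  obtain ⟨l, hl0, hlb, hopt⟩ := exists_neg_mul_add_sq_mul_le (V := 8448 * V)
    (β := 1 / (128 * b)) (by positivity) (by positivity) ht
  have hmgf : ∀ i, Integrable (fun ω => exp (l * a i * Y i ω)) μ ∧
      mgf (Y i) μ (l * a i) ≤ exp (8448 * (l * a i) ^ 2 * (Ks i ^ 2 * log (Ks i))) :=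
    fun i => integrable_exp_mul_and_mgf_le_of_psiNorm_le (hKs i) (hint i) (hmean i) (habs i)
      (hpsi i) (abs_mul_le_one_div_mul_log hl0 hlb (hamax i) (hKs i) (hKsK i))
  have hchernoff := measureReal_sum_ge_le_of_mgf_le (X := fun i ω => a i * Y i ω)
    (v := fun i => 8448 * (a i ^ 2 * Ks i ^ 2 * log (Ks i))) (hind.comp _ fun i => by fun_prop)
    (fun i => by fun_prop) hl0 (fun i => by simpa only [mul_assoc] using (hmgf i).1)
    (fun i => by
      rw [mgf_const_mul, mul_comm]
      exact (hmgf i).2.trans_eq (by ring_nf)) t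
  rw [← Finset.mul_sum] at hchernoff
  refine (ENNReal.le_ofReal_iff_toReal_le (measure_ne_top _ _) (exp_pos _).le).mpr
    (hchernoff.trans (exp_le_exp.mpr (hopt.trans ?_)))
  rw [neg_mul, neg_le_neg_iff, mul_min_of_nonneg _ _ (by norm_num)]
  refine min_le_min (le_of_eq (by ring)) ?_
  rw [show 1 / (128 * b) * t / 2 = 1 / 256 * (t / b) by ring]
  exact mul_le_mul_of_nonneg_right (by norm_num) (by positivity)

end

theorem new_bernstein : ∃ c : ℝ, 0 < c ∧
    ∀ (Ω : Type) (_ : MeasurableSpace Ω) (μ : Measure Ω) (_ : IsProbabilityMeasure μ)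
      (m : ℕ) (a : Fin m → ℝ) (Y : Fin m → Ω → ℝ) (Ks : Fin m → ℝ) (K amax : ℝ),
      a ≠ 0 →
      (∀ i, Measurable (Y i)) →
      iIndepFun Y μ →
      (∀ i, Integrable (Y i) μ) →
      (∀ i, (∫ ω, Y i ω ∂μ) = 0) →
      (∀ i, (∫⁻ ω, ENNReal.ofReal |Y i ω| ∂μ) ≤ 2) →
      (∀ i, (6 / 5 : ℝ) ≤ Ks i) →
      (∀ i, psiNorm μ 1 (Y i) ≤ ENNReal.ofReal (Ks i ^ 2)) →
      IsGreatest (Set.range Ks) K →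
      IsGreatest (Set.range fun i => |a i|) amax →
      ∀ t : ℝ, 0 ≤ t →
        μ {ω | t ≤ |∑ i, a i * Y i ω|} ≤
          ENNReal.ofReal (2 * Real.exp (-c * min
            (t ^ 2 / ∑ i, a i ^ 2 * Ks i ^ 2 * Real.log (Ks i))
            (t / (amax * K ^ 2 * Real.log K)))) := by
  refine ⟨1 / 33792, by norm_num, ?_⟩
  intro Ω _ μ _ m a Y Ks K amax ha hY hind hint hmean habs hKs hpsi hK hamax t ht
  have hKsK : ∀ i, Ks i ≤ K := fun i => hK.2 ⟨i, rfl⟩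
  have hamax : ∀ i, |a i| ≤ amax := fun i => hamax.2 ⟨i, rfl⟩
  have upper := measure_sum_mul_ge_le ha hY hind hint hmean habs hKs hpsi hKsK hamax ht
  have lower := measure_sum_mul_ge_le (neg_ne_zero.mpr ha) hY hind hint hmean habs hKs hpsi
    hKsK (by simpa using hamax) ht
  simp only [Pi.neg_apply, neg_sq] at lower
  have hsplit : {ω | t ≤ |∑ i, a i * Y i ω|} ⊆
      {ω | t ≤ ∑ i, a i * Y i ω} ∪ {ω | t ≤ ∑ i, -a i * Y i ω} := by
    intro ω (hω : t ≤ _)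
    simpa only [Set.mem_union, Set.mem_ofPred_eq, neg_mul, Finset.sum_neg_distrib] using
      le_abs.mp hω
  calc μ {ω | t ≤ |∑ i, a i * Y i ω|}
      ≤ μ {ω | t ≤ ∑ i, a i * Y i ω} + μ {ω | t ≤ ∑ i, -a i * Y i ω} :=
        (measure_mono hsplit).trans (measure_union_le _ _)
    _ ≤ _ := by
        rw [two_mul, ENNReal.ofReal_add (exp_pos _).le (exp_pos _).le]
        exact add_le_add upper lower
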